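/- Let V be a real inner product space, A = [[X,W],[Z,Y]] with entries in V, A* = [[Y,-W],[-Z,X]], and define (A,B) = g(X,V')g(Y,M) - g(W,K)g(Z,N). If ⟨A,A*⟩ = 0, (A,A*) = 0, and O(A) = 0, then g(X,Y) = g(W,W) = g(Z,Z) = g(Z,W), and in particular W = Z. -/

import Mathlib

open scoped RealInnerProductSpace
open Matrix

noncomputable def matIp {V : Type*} [NormedAddCommGroup V] [InnerProductSpace ℝ V]
    (A B : Matrix (Fin 2) (Fin 2) V) : ℝ :=
  ∑ i, ∑ j, ⟪A i j, B i j⟫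

noncomputable def Oform {V : Type*} [NormedAddCommGroup V] [InnerProductSpace ℝ V]
    (A : Matrix (Fin 2) (Fin 2) V) : ℝ :=
  ⟪A 0 0, A 1 1⟫ - ⟪A 1 0, A 0 1⟫

noncomputable def detForm {V : Type*} [NormedAddCommGroup V] [InnerProductSpace ℝ V]
    (A B : Matrix (Fin 2) (Fin 2) V) : ℝ :=
  ⟪A 0 0, B 0 0⟫ * ⟪A 1 1, B 1 1⟫ - ⟪A 0 1, B 0 1⟫ * ⟪A 1 0, B 1 0⟫

def mstar {V : Type*} [AddCommGroup V] (A : Matrix (Fin 2) (Fin 2) V) :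
    Matrix (Fin 2) (Fin 2) V :=
  !![A 1 1, -(A 0 1); -(A 1 0), A 0 0]

/-! The condition `⟨A,A*⟩ = 0` says `2 g(X,Y) = ‖W‖² + ‖Z‖²` and `(A,A*) = 0` says
`g(X,Y)² = ‖W‖² ‖Z‖²`, so `g(X,Y)` is both the arithmetic and the geometric mean of `‖W‖²` and
`‖Z‖²`; hence both equal `g(X,Y)`. Then `O(A) = 0` gives `g(Z,W) = g(X,Y)` as well, so
`‖W - Z‖² = ‖W‖² - 2 g(Z,W) + ‖Z‖² = 0`. -/

theorem eq_of_two_mul_eq_add_of_sq_eq_mul {t a b : ℝ} (hsum : 2 * t = a + b)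
    (hprod : t ^ 2 = a * b) : t = a ∧ t = b := by
  have hab : (a - b) ^ 2 = 0 :=
    calc (a - b) ^ 2 = (a + b) ^ 2 - 4 * (a * b) := by ring
      _ = (2 * t) ^ 2 - 4 * t ^ 2 := by rw [hsum, hprod]
      _ = 0 := by ring
  have : a = b := sub_eq_zero.mp (pow_eq_zero_iff two_ne_zero |>.mp hab)
  constructor <;> linarith

section InnerProductSpace

variable {V : Type*} [NormedAddCommGroup V] [InnerProductSpace ℝ V]

theorem matIp_mstar (A : Matrix (Fin 2) (Fin 2) V) :
    matIp A (mstar A) = 2 * ⟪A 0 0, A 1 1⟫ - ⟪A 0 1, A 0 1⟫ - ⟪A 1 0, A 1 0⟫ := by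
  simp only [matIp, mstar, Fin.sum_univ_two, of_apply, cons_val', cons_val_zero, cons_val_one,
    empty_val', cons_val_fin_one, inner_neg_right, real_inner_comm (A 0 0) (A 1 1)]
  ring

theorem detForm_mstar (A : Matrix (Fin 2) (Fin 2) V) :
    detForm A (mstar A) = ⟪A 0 0, A 1 1⟫ ^ 2 - ⟪A 0 1, A 0 1⟫ * ⟪A 1 0, A 1 0⟫ := by
  simp only [detForm, mstar, of_apply, cons_val', cons_val_zero, cons_val_one, empty_val',
    cons_val_fin_one, inner_neg_right, real_inner_comm (A 0 0) (A 1 1)]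
  ring

theorem eq_of_real_inner_eq_inner_self {v w : V} (hv : ⟪w, v⟫ = ⟪v, v⟫) (hw : ⟪w, v⟫ = ⟪w, w⟫) :
    v = w := by
  have : ⟪v - w, v - w⟫ = 0 := by
    rw [inner_sub_sub_self, real_inner_comm w v]
    linarith
  exact sub_eq_zero.mp (inner_self_eq_zero.mp this)

end InnerProductSpace

/-- If `⟨A,A*⟩ = 0`, `(A,A*) = 0` and `O(A) = 0`, then
`g(X,Y) = g(W,W) = g(Z,Z) = g(Z,W)` and in particular `W = Z`. -/
theorem eq_entries_of_star_orthogonal {V : Type*} [NormedAddCommGroup V]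
    [InnerProductSpace ℝ V] (X W Z Y : V)
    (h1 : matIp !![X, W; Z, Y] (mstar !![X, W; Z, Y]) = 0)
    (h2 : detForm !![X, W; Z, Y] (mstar !![X, W; Z, Y]) = 0)
    (h3 : Oform !![X, W; Z, Y] = 0) :
    ⟪X, Y⟫ = ⟪W, W⟫ ∧ ⟪X, Y⟫ = ⟪Z, Z⟫ ∧ ⟪X, Y⟫ = ⟪Z, W⟫ ∧ W = Z := by
  rw [matIp_mstar] at h1
  rw [detForm_mstar] at h2
  simp only [Oform, of_apply, cons_val', cons_val_zero, cons_val_one, empty_val',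
    cons_val_fin_one] at h1 h2 h3
  obtain ⟨hW, hZ⟩ : ⟪X, Y⟫ = ⟪W, W⟫ ∧ ⟪X, Y⟫ = ⟪Z, Z⟫ :=
    eq_of_two_mul_eq_add_of_sq_eq_mul (by linarith) (by linarith)
  have hZW : ⟪X, Y⟫ = ⟪Z, W⟫ := by linarith
  exact ⟨hW, hZ, hZW, eq_of_real_inner_eq_inner_self (hZW ▸ hW) (hZW ▸ hZ)⟩
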